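/- arXiv:2404.19044 — 5 statements merged into one kernel-verified Lean document; each statement's English description precedes it below -/
import Mathlib

section
/- Let X ⊂ ℂ^m be an unbounded pure k-dimensional complex algebraic set, and let W ⊂ ℂ^m be an (m−k)-dimensional complex vector subspace with W ∩ C_{3,∞}(X) = {0}. Writing ℂ^m = V × W with V the orthogonal complement of W, there exist positive constants C and R such that X ⊂ {(x,y) ∈ V × W : ‖y‖ < C‖x‖} ∪ B_R, where B_R is the open ball of radius R centered at the origin of ℂ^m. -/
/-!
Suppose no such `C, R` exist. Then there are points `z n ∈ X` with `‖z n‖ → ∞` whose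
`Wᗮ`-component is `o(‖z n‖)`. By compactness of the unit ball a subsequence of the directions
`z n / ‖z n‖` converges to a unit vector `v`; it lies in `C_{3,∞}(X)` by definition and has
vanishing `Wᗮ`-component, i.e. `v ∈ W`, contradicting `W ∩ C_{3,∞}(X) = {0}`.
-/

open Filter Topology Metric

noncomputable section

/-- `ℂ^m` with its Euclidean (Hermitian) structure. -/
abbrev Em (m : ℕ) := EuclideanSpace ℂ (Fin m)

/-- Evaluation of a multivariate polynomial at a point of `ℂ^m`. -/
def pev {m : ℕ} (f : MvPolynomial (Fin m) ℂ) (x : Em m) : ℂ :=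
  MvPolynomial.eval (fun i => x i) f

/-- A (complex, affine) algebraic subset of `ℂ^m`: the common zero locus of a
family of complex polynomials. -/
def IsAlgSet {m : ℕ} (X : Set (Em m)) : Prop :=
  ∃ S : Set (MvPolynomial (Fin m) ℂ), X = {x | ∀ f ∈ S, pev f x = 0}

/-- An irreducible algebraic subset of `ℂ^m`. -/
def IsIrredAlgSet {m : ℕ} (Z : Set (Em m)) : Prop :=
  IsAlgSet Z ∧ Z.Nonempty ∧
    ∀ Y₁ Y₂ : Set (Em m), IsAlgSet Y₁ → IsAlgSet Y₂ → Z ⊆ Y₁ ∪ Y₂ → Z ⊆ Y₁ ∨ Z ⊆ Y₂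

/-- An irreducible component of `X`: a maximal irreducible algebraic subset of `X`. -/
def IsIrredComponent {m : ℕ} (X Z : Set (Em m)) : Prop :=
  IsIrredAlgSet Z ∧ Z ⊆ X ∧ ∀ Z', IsIrredAlgSet Z' → Z' ⊆ X → Z ⊆ Z' → Z = Z'

/-- The (complex) dimension of an algebraic subset of `ℂ^m`, as the Krull dimension of
the poset of irreducible algebraic subsets contained in it (for complex algebraic
sets this coincides with the complex dimension). -/
def algDim {m : ℕ} (X : Set (Em m)) : WithBot ℕ∞ :=
  Order.krullDim {Z : Set (Em m) // IsIrredAlgSet Z ∧ Z ⊆ X}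

/-- `X` is of pure dimension `k`: every irreducible component has dimension `k`. -/
def IsPureDim {m : ℕ} (X : Set (Em m)) (k : ℕ) : Prop :=
  X.Nonempty ∧ ∀ Z, IsIrredComponent X Z → algDim Z = (k : WithBot ℕ∞)

/-- The Zariski tangent space of `X` at `p`: the joint kernel of the differentials at `p`
of all polynomials vanishing identically on `X`.  At a smooth point of `X` this is the
usual tangent space `T_p X`. -/
def zTangent {m : ℕ} (X : Set (Em m)) (p : Em m) : Submodule ℂ (Em m) :=
  ⨅ f ∈ {f : MvPolynomial (Fin m) ℂ | ∀ x ∈ X, pev f x = 0},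
    LinearMap.ker (fderiv ℂ (pev f) p : Em m →ₗ[ℂ] ℂ)

/-- The singular locus of a pure `k`-dimensional algebraic set `X`: the points of `X`
where the Zariski tangent space does not have dimension `k`. -/
def singLocus {m : ℕ} (X : Set (Em m)) (k : ℕ) : Set (Em m) :=
  {p ∈ X | Module.finrank ℂ (zTangent X p) ≠ k}

/-- The Whitney tangent cone at infinity `C_{3,∞}(X)`. -/
def C3Inf {m : ℕ} (X : Set (Em m)) : Set (Em m) :=
  {v | ∃ (p : ℕ → Em m) (t : ℕ → ℂ), (∀ j, p j ∈ X) ∧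
    Tendsto (fun j => ‖p j‖) atTop atTop ∧ Tendsto (fun j => t j • p j) atTop (𝓝 v)}

/-- The Whitney tangent cone at infinity `C_{4,∞}(X)` (for `X` pure `k`-dimensional). -/
def C4Inf {m : ℕ} (X : Set (Em m)) (k : ℕ) : Set (Em m) :=
  {v | ∃ (p w : ℕ → Em m), (∀ j, p j ∈ X \ singLocus X k) ∧
    (∀ j, w j ∈ zTangent X (p j)) ∧
    Tendsto (fun j => ‖p j‖) atTop atTop ∧ Tendsto w atTop (𝓝 v)}

/-- The Whitney tangent cone at infinity `C_{5,∞}(X)`. -/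
def C5Inf {m : ℕ} (X : Set (Em m)) : Set (Em m) :=
  {v | ∃ (p q : ℕ → Em m) (t : ℕ → ℂ), (∀ j, p j ∈ X) ∧ (∀ j, q j ∈ X) ∧
    Tendsto (fun j => ‖p j‖) atTop atTop ∧ Tendsto (fun j => ‖q j‖) atTop atTop ∧
    Tendsto (fun j => t j • (p j - q j)) atTop (𝓝 v)}

section Normalize

variable {𝕜 E F : Type*} [RCLike 𝕜] [NormedAddCommGroup E] [NormedSpace 𝕜 E]

theorem norm_inv_norm_smul_le_one (x : E) : ‖(‖x‖⁻¹ : 𝕜) • x‖ ≤ 1 := by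
  rw [norm_smul, norm_inv, RCLike.norm_ofReal, abs_norm]
  exact inv_mul_le_one_of_le₀ le_rfl (norm_nonneg x)

theorem exists_subseq_tendsto_inv_norm_smul [ProperSpace E] {p : ℕ → E}
    (hp : ∀ᶠ n in atTop, p n ≠ 0) :
    ∃ v : E, ‖v‖ = 1 ∧ ∃ φ : ℕ → ℕ, StrictMono φ ∧
      Tendsto (fun j => (‖p (φ j)‖⁻¹ : 𝕜) • p (φ j)) atTop (𝓝 v) := by
  obtain ⟨v, -, φ, hφ, hv⟩ := (isCompact_closedBall (0 : E) 1).tendsto_subseq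
    (x := fun n => (‖p n‖⁻¹ : 𝕜) • p n) fun n => by simpa using norm_inv_norm_smul_le_one (p n)
  have hunit : ∀ᶠ n in atTop, ‖(‖p n‖⁻¹ : 𝕜) • p n‖ = 1 := hp.mono fun _ => norm_smul_inv_norm
  have hnorm : Tendsto (fun j => ‖(‖p (φ j)‖⁻¹ : 𝕜) • p (φ j)‖) atTop (𝓝 1) :=
    tendsto_const_nhds.congr' <| (hφ.tendsto_atTop.eventually hunit).mono fun _ h => h.symm
  exact ⟨v, tendsto_nhds_unique hv.norm hnorm, φ, hφ, hv⟩

theorem ContinuousLinearMap.apply_eq_zero_of_tendsto_inv_norm_smul [NormedAddCommGroup F]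
    [NormedSpace 𝕜 F] (P : E →L[𝕜] F) {ι : Type*} {l : Filter ι} [l.NeBot] {p : ι → E} {v : E}
    (hP : Tendsto (fun n => ‖P (p n)‖ / ‖p n‖) l (𝓝 0))
    (hv : Tendsto (fun n => (‖p n‖⁻¹ : 𝕜) • p n) l (𝓝 v)) :
    P v = 0 := by
  have hPv : Tendsto (fun n => P ((‖p n‖⁻¹ : 𝕜) • p n)) l (𝓝 (P v)) :=
    (P.continuous.tendsto v).comp hv
  have hP0 : Tendsto (fun n => P ((‖p n‖⁻¹ : 𝕜) • p n)) l (𝓝 0) := by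
    refine tendsto_zero_iff_norm_tendsto_zero.2 (hP.congr fun n => ?_)
    rw [map_smul, norm_smul, norm_inv, RCLike.norm_ofReal, abs_norm, div_eq_inv_mul]
  exact tendsto_nhds_unique hPv hP0

end Normalize

theorem Submodule.norm_sub_starProjection_le {𝕜 E : Type*} [RCLike 𝕜]
    [NormedAddCommGroup E] [InnerProductSpace 𝕜 E] (K : Submodule 𝕜 E)
    [K.HasOrthogonalProjection] (z : E) : ‖z - K.starProjection z‖ ≤ ‖z‖ := by
  rw [← K.starProjection_orthogonal_val]
  exact Kᗮ.norm_starProjection_apply_le z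

theorem mem_C3Inf_of_tendsto_inv_norm_smul {m : ℕ} {X : Set (Em m)} {p : ℕ → Em m} {v : Em m}
    (hpX : ∀ n, p n ∈ X) (hp : Tendsto (fun n => ‖p n‖) atTop atTop)
    (hv : Tendsto (fun n => (‖p n‖⁻¹ : ℂ) • p n) atTop (𝓝 v)) :
    v ∈ C3Inf X :=
  ⟨p, fun n => (‖p n‖⁻¹ : ℂ), hpX, hp, hv⟩

theorem exists_ne_zero_mem_C3Inf_apply_eq_zero {m : ℕ} {F : Type*} [NormedAddCommGroup F]
    [NormedSpace ℂ F] (P : Em m →L[ℂ] F) {X : Set (Em m)} {p : ℕ → Em m}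
    (hpX : ∀ n, p n ∈ X) (hp : Tendsto (fun n => ‖p n‖) atTop atTop)
    (hP : Tendsto (fun n => ‖P (p n)‖ / ‖p n‖) atTop (𝓝 0)) :
    ∃ v ∈ C3Inf X, v ≠ 0 ∧ P v = 0 := by
  have hp0 : ∀ᶠ n in atTop, p n ≠ 0 :=
    (hp.eventually_gt_atTop 0).mono fun _ => norm_pos_iff.1
  obtain ⟨v, hv1, φ, hφ, hv⟩ := exists_subseq_tendsto_inv_norm_smul (𝕜 := ℂ) hp0
  refine ⟨v, mem_C3Inf_of_tendsto_inv_norm_smul (fun j => hpX (φ j))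
    (hp.comp hφ.tendsto_atTop) hv, norm_ne_zero_iff.1 (by simp [hv1]),
    P.apply_eq_zero_of_tendsto_inv_norm_smul (hP.comp hφ.tendsto_atTop) hv⟩

theorem X_subset_cone_union_ball_general {m : ℕ} (X : Set (Em m))
    (W : Submodule ℂ (Em m))
    (htrans : (W : Set (Em m)) ∩ C3Inf X = {0}) :
    ∃ C R : ℝ, 0 < C ∧ 0 < R ∧
      X ⊆ {z : Em m | ‖z - (Submodule.orthogonalProjectionOnto Wᗮ z : Em m)‖ <
              C * ‖(Submodule.orthogonalProjectionOnto Wᗮ z : Em m)‖} ∪ Metric.ball 0 R := by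
  by_contra! h
  set Q := Wᗮ.starProjection
  have hbad : ∀ n : ℕ, ∃ z ∈ X, ((n : ℝ) + 1) * ‖Q z‖ ≤ ‖z - Q z‖ ∧ (n : ℝ) + 1 ≤ ‖z‖ := by
    intro n
    obtain ⟨z, hzX, hz⟩ := Set.not_subset.1 (h (n + 1) (n + 1) (by positivity) (by positivity))
    simp only [Set.mem_union, Set.mem_ofPred_eq, mem_ball_zero_iff, not_or, not_lt] at hz
    exact ⟨z, hzX, hz⟩
  choose z hzX hcone hfar using hbad
  have hz : Tendsto (fun n => ‖z n‖) atTop atTop :=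
    tendsto_atTop_mono hfar (tendsto_atTop_add_const_right _ 1 tendsto_natCast_atTop_atTop)
  have hQz : Tendsto (fun n => ‖Q (z n)‖ / ‖z n‖) atTop (𝓝 0) := by
    refine squeeze_zero (fun n => by positivity) (fun n => ?_)
      tendsto_one_div_add_atTop_nhds_zero_nat
    have hzpos : 0 < ‖z n‖ := lt_of_lt_of_le (by positivity) (hfar n)
    rw [div_le_div_iff₀ hzpos (by positivity)]
    linarith [hcone n, Wᗮ.norm_sub_starProjection_le (z n)]
  obtain ⟨v, hvC, hv0, hQv⟩ := exists_ne_zero_mem_C3Inf_apply_eq_zero Q hzX hz hQz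
  have hvW : v ∈ W := W.orthogonal_orthogonal ▸ (Wᗮ.starProjection_apply_eq_zero_iff).1 hQv
  exact hv0 (htrans.subset ⟨hvW, hvC⟩)

/-- Let `X ⊆ ℂ^m` be an unbounded pure `k`-dimensional complex algebraic set
and `W` an `(m-k)`-dimensional complex subspace with `W ∩ C_{3,∞}(X) = {0}`.  Writing each
`z ∈ ℂ^m` as `z = x + y` with `x ∈ V = Wᗮ` (the orthogonal projection of `z` to `Wᗮ`) and
`y ∈ W`, there are constants `C, R > 0` with
`X ⊆ {(x, y) : ‖y‖ < C ‖x‖} ∪ B_R`. -/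
theorem X_subset_cone_union_ball {m k : ℕ} (X : Set (Em m))
    (hX : IsAlgSet X) (hpure : IsPureDim X k) (hub : ¬ Bornology.IsBounded X)
    (W : Submodule ℂ (Em m)) (hW : Module.finrank ℂ W = m - k)
    (htrans : (W : Set (Em m)) ∩ C3Inf X = {0}) :
    ∃ C R : ℝ, 0 < C ∧ 0 < R ∧
      X ⊆ {z : Em m | ‖z - (Submodule.orthogonalProjectionOnto Wᗮ z : Em m)‖ <
              C * ‖(Submodule.orthogonalProjectionOnto Wᗮ z : Em m)‖} ∪ Metric.ball 0 R :=
  X_subset_cone_union_ball_general X W htrans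

end
end

section
/- Let X ⊂ ℂ^m be an unbounded pure k-dimensional complex algebraic set, and let W ⊂ ℂ^m be an (m−k)-dimensional complex vector subspace with W ∩ C_{3,∞}(X) = {0}. Writing ℂ^m = V × W with V the orthogonal complement of W, and letting π : ℂ^m → V be the orthogonal projection π(x,y) = x, the restriction π : X → V is a proper map (preimages of compact sets are compact). -/
open Filter Topology Metric

noncomputable section

/-!
Since algebraic sets are closed, the preimage `X ∩ π⁻¹(K)` is closed, so it suffices to show it
is bounded. Otherwise it contains points `p_j` with `‖p_j‖ → ∞` whose directions
`p_j / ‖p_j‖` converge to a unit vector `v`, which lies in `C_{3,∞}(X)` by definition. As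
`π (p_j)` stays in the bounded set `K`, `π v = lim π (p_j) / ‖p_j‖ = 0`, i.e. `v ∈ W`,
contradicting `W ∩ C_{3,∞}(X) = {0}`.
-/

theorem continuous_pev {m : ℕ} (f : MvPolynomial (Fin m) ℂ) : Continuous (pev f) :=
  (MvPolynomial.continuous_eval f).comp (continuous_pi fun i => PiLp.continuous_apply 2 _ i)

theorem IsAlgSet.isClosed {m : ℕ} {X : Set (Em m)} (hX : IsAlgSet X) : IsClosed X := by
  obtain ⟨S, rfl⟩ := hX
  simp only [Set.ofPred_forall]
  exact isClosed_biInter fun f _ => isClosed_eq (continuous_pev f) continuous_const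

section Normalize

variable {𝕜 E F : Type*} [RCLike 𝕜] [NormedAddCommGroup E] [NormedSpace 𝕜 E]

theorem exists_seq_tendsto_norm_atTop_of_not_isBounded {S : Set E}
    (hS : ¬ Bornology.IsBounded S) :
    ∃ p : ℕ → E, (∀ j, p j ∈ S) ∧ Tendsto (fun j => ‖p j‖) atTop atTop := by
  have hlarge : ∀ j : ℕ, ∃ p ∈ S, (j : ℝ) < ‖p‖ := by
    intro j
    by_contra! h
    exact hS (isBounded_iff_forall_norm_le.2 ⟨j, h⟩)
  choose p hpS hpj using hlarge
  exact ⟨p, hpS, tendsto_atTop_mono (fun j => (hpj j).le) tendsto_natCast_atTop_atTop⟩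

theorem exists_limit_direction_of_not_isBounded [ProperSpace E]
    {S : Set E} (hS : ¬ Bornology.IsBounded S) :
    ∃ (p : ℕ → E) (v : E), (∀ j, p j ∈ S) ∧ ‖v‖ = 1 ∧
      Tendsto (fun j => ‖p j‖) atTop atTop ∧
      Tendsto (fun j => ((‖p j‖⁻¹ : ℝ) : 𝕜) • p j) atTop (𝓝 v) := by
  obtain ⟨p, hpS, hp⟩ := exists_seq_tendsto_norm_atTop_of_not_isBounded hS
  obtain ⟨j₀, hj₀⟩ := (hp.eventually_gt_atTop 0).exists_forall_of_atTop
  set q : ℕ → E := fun j => p (j + j₀)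
  have hq : Tendsto (fun j => ‖q j‖) atTop atTop := hp.comp (tendsto_add_atTop_nat j₀)
  have hsphere : ∀ j, ((‖q j‖⁻¹ : ℝ) : 𝕜) • q j ∈ sphere (0 : E) 1 := fun j => by
    rw [mem_sphere_zero_iff_norm, norm_smul, RCLike.norm_ofReal,
      abs_of_nonneg (inv_nonneg.2 (norm_nonneg _)),
      inv_mul_cancel₀ (hj₀ (j + j₀) (Nat.le_add_left _ _)).ne']
  obtain ⟨v, hv, φ, hφ, hconv⟩ := (isCompact_sphere (0 : E) 1).tendsto_subseq hsphere
  exact ⟨q ∘ φ, v, fun j => hpS _, mem_sphere_zero_iff_norm.1 hv,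
    hq.comp hφ.tendsto_atTop, hconv⟩

theorem ContinuousLinearMap.map_eq_zero_of_tendsto_normalize [NormedAddCommGroup F]
    [NormedSpace 𝕜 F] (f : E →L[𝕜] F) {p : ℕ → E} {v : E} {C : ℝ}
    (hfp : ∀ j, ‖f (p j)‖ ≤ C) (hp : Tendsto (fun j => ‖p j‖) atTop atTop)
    (hpv : Tendsto (fun j => ((‖p j‖⁻¹ : ℝ) : 𝕜) • p j) atTop (𝓝 v)) : f v = 0 := by
  have hlim : Tendsto (fun j => f (((‖p j‖⁻¹ : ℝ) : 𝕜) • p j)) atTop (𝓝 (f v)) :=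
    (f.continuous.tendsto v).comp hpv
  have hzero : Tendsto (fun j => f (((‖p j‖⁻¹ : ℝ) : 𝕜) • p j)) atTop (𝓝 0) := by
    have hscalar : Tendsto (fun j => ((‖p j‖⁻¹ : ℝ) : 𝕜)) atTop (𝓝 0) :=
      RCLike.ofReal_zero (K := 𝕜) ▸
        (RCLike.continuous_ofReal.tendsto 0).comp hp.inv_tendsto_atTop
    simp only [map_smul]
    exact hscalar.zero_smul_isBoundedUnder_le ⟨C, eventually_map.2 (.of_forall hfp)⟩
  exact tendsto_nhds_unique hlim hzero

end Normalize

theorem proj_restriction_proper_general {m : ℕ} (X : Set (Em m))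
    (hX : IsAlgSet X)
    (W : Submodule ℂ (Em m))
    (htrans : (W : Set (Em m)) ∩ C3Inf X = {0}) :
    ∀ K : Set Wᗮ, IsCompact K →
      IsCompact {p ∈ X | Wᗮ.orthogonalProjectionOnto p ∈ K} := by
  intro K hK
  refine isCompact_of_isClosed_isBounded
    (hX.isClosed.inter (hK.isClosed.preimage Wᗮ.orthogonalProjectionOnto.continuous)) ?_
  by_contra hunb
  obtain ⟨p, v, hpS, hv, hp, hpv⟩ :=
    exists_limit_direction_of_not_isBounded (𝕜 := ℂ) hunb
  obtain ⟨C, hC⟩ := hK.isBounded.exists_norm_le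
  have hvW : v ∈ W := by
    rw [← W.orthogonal_orthogonal, ← Submodule.orthogonalProjectionOnto_eq_zero_iff]
    exact Wᗮ.orthogonalProjectionOnto.map_eq_zero_of_tendsto_normalize
      (fun j => hC _ (hpS j).2) hp hpv
  have hvC3 : v ∈ C3Inf X := ⟨p, _, fun j => (hpS j).1, hp, hpv⟩
  have hv0 : v ∈ ({0} : Set (Em m)) := htrans ▸ ⟨hvW, hvC3⟩
  simp [Set.mem_singleton_iff.1 hv0] at hv

/-- Let `X ⊆ ℂ^m` be an unbounded pure `k`-dimensional complex algebraic set
and `W` an `(m-k)`-dimensional complex subspace with `W ∩ C_{3,∞}(X) = {0}`, and let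
`π : ℂ^m → V = Wᗮ` be the orthogonal projection.  Then `π : X → V` is a proper map:
preimages of compact sets are compact. -/
theorem proj_restriction_proper {m k : ℕ} (X : Set (Em m))
    (hX : IsAlgSet X) (hpure : IsPureDim X k) (hub : ¬ Bornology.IsBounded X)
    (W : Submodule ℂ (Em m)) (hW : Module.finrank ℂ W = m - k)
    (htrans : (W : Set (Em m)) ∩ C3Inf X = {0}) :
    ∀ K : Set Wᗮ, IsCompact K →
      IsCompact {p ∈ X | Wᗮ.orthogonalProjectionOnto p ∈ K} :=
  proj_restriction_proper_general X hX W htrans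

end
end

section
/- Let X ⊂ ℂ^m be an unbounded pure k-dimensional complex algebraic set such that C_{5,∞}(X) is a pure k-dimensional algebraic set, let Ω be an algebraic region of type (k,m) containing X and C_{5,∞}(X), with associated orthogonal decomposition ℂ^m = V₁ ⊕ V₂, and let π_Ω : ℂ^m → V₁ be the orthogonal projection. Then the restrictions π_Ω : X → V₁ and π_Ω : C_{5,∞}(X) → V₁ are proper maps, and ker π_Ω ∩ C_{5,∞}(X) = {0}. -/
open Filter Topology Metric

noncomputable section

/-!
Over the region `Ω` the norm of a point is controlled by the norm of its projection to `V₁`,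
so preimages of compact sets under `π_Ω` are bounded in `Ω`; they are closed because algebraic
sets are. A vector `v ∈ C_{5,∞}(X) ∩ V₁ᗮ` spans a complex line inside the cone `C_{5,∞}(X) ⊆ Ω`,
and on `V₁ᗮ` the region `Ω` is the ball of radius `A`, so `v = 0`.
-/

section AlgRegion

variable {𝕜 E : Type*} [RCLike 𝕜] [NormedAddCommGroup E] [InnerProductSpace 𝕜 E]
  (V : Submodule 𝕜 E)

def algRegion (A B : ℝ) : Set E :=
  {z | ∃ z' ∈ V, ∃ z'' ∈ Vᗮ, z = z' + z'' ∧ ‖z''‖ ≤ A * (1 + ‖z'‖) ^ B}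

variable {V} [V.HasOrthogonalProjection]

theorem mem_algRegion_iff {A B : ℝ} {z : E} :
    z ∈ algRegion V A B ↔ ‖z - V.starProjection z‖ ≤ A * (1 + ‖V.starProjection z‖) ^ B := by
  constructor
  · rintro ⟨z', hz', z'', hz'', rfl, hle⟩
    rwa [Submodule.eq_starProjection_of_mem_orthogonal' hz' hz'' rfl, add_sub_cancel_left]
  · exact fun hle => ⟨_, V.starProjection_apply_mem z, _,
      Submodule.sub_starProjection_mem_orthogonal z, (add_sub_cancel _ _).symm, hle⟩

theorem norm_le_of_mem_algRegion {A B : ℝ} {z : E} (hz : z ∈ algRegion V A B) :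
    ‖z‖ ≤ ‖V.orthogonalProjectionOnto z‖ + A * (1 + ‖V.orthogonalProjectionOnto z‖) ^ B := by
  have hP : ‖V.orthogonalProjectionOnto z‖ = ‖V.starProjection z‖ := rfl
  rw [hP]
  calc ‖z‖ = ‖V.starProjection z + (z - V.starProjection z)‖ := by rw [add_sub_cancel]
    _ ≤ ‖V.starProjection z‖ + ‖z - V.starProjection z‖ := norm_add_le _ _
    _ ≤ _ := by gcongr; exact mem_algRegion_iff.1 hz

theorem isCompact_inter_preimage_orthogonalProjectionOnto [ProperSpace E] {A B : ℝ} {S : Set E}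
    (hS : IsClosed S) (hSΩ : S ⊆ algRegion V A B) {K : Set V} (hK : IsCompact K) :
    IsCompact {p ∈ S | V.orthogonalProjectionOnto p ∈ K} := by
  have hcont : Continuous fun y : V => ‖y‖ + A * (1 + ‖y‖) ^ B :=
    continuous_norm.add <| continuous_const.mul <|
      (continuous_const.add continuous_norm).rpow_const fun y => .inl (by positivity : 1 + ‖y‖ ≠ 0)
  obtain ⟨C, hC⟩ := hK.exists_bound_of_continuousOn hcont.continuousOn
  refine Metric.isCompact_of_isClosed_isBounded
    (hS.inter (hK.isClosed.preimage V.orthogonalProjectionOnto.continuous)) ?_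
  refine isBounded_iff_forall_norm_le.2 ⟨C, fun z ⟨hzS, hzK⟩ => ?_⟩
  exact (norm_le_of_mem_algRegion (hSΩ hzS)).trans ((le_abs_self _).trans (hC _ hzK))

theorem eq_zero_of_mem_orthogonal_of_smul_mem_algRegion {A B : ℝ} {v : E} (hv : v ∈ Vᗮ)
    (hΩ : ∀ c : 𝕜, c • v ∈ algRegion V A B) : v = 0 := by
  have hbound : ∀ n : ℕ, n * ‖v‖ ≤ A := fun n => by
    have hn := mem_algRegion_iff.1 (hΩ n)
    rwa [Submodule.eq_starProjection_of_mem_orthogonal' V.zero_mem (Vᗮ.smul_mem _ hv)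
      (zero_add _).symm, norm_zero, sub_zero, add_zero, Real.one_rpow, mul_one, norm_smul,
      RCLike.norm_natCast] at hn
  by_contra hne
  have hpos : 0 < ‖v‖ := norm_pos_iff.2 hne
  obtain ⟨n, hn⟩ := exists_nat_gt (A / ‖v‖)
  exact (hbound n).not_gt ((div_lt_iff₀ hpos).1 hn)

end AlgRegion

theorem smul_mem_C5Inf {m : ℕ} {X : Set (Em m)} {v : Em m} (hv : v ∈ C5Inf X) (c : ℂ) :
    c • v ∈ C5Inf X := by
  obtain ⟨p, q, t, hp, hq, hpn, hqn, hlim⟩ := hv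
  exact ⟨p, q, fun j => c * t j, hp, hq, hpn, hqn, by simpa [mul_smul] using hlim.const_smul c⟩

theorem zero_mem_C5Inf {m : ℕ} {X : Set (Em m)} (hub : ¬ Bornology.IsBounded X) :
    0 ∈ C5Inf X := by
  have hfar : ∀ j : ℕ, ∃ x ∈ X, (j : ℝ) < ‖x‖ := fun j => by
    by_contra! hle
    exact hub (isBounded_iff_forall_norm_le.2 ⟨j, hle⟩)
  choose p hpX hpn using hfar
  have hten : Tendsto (fun j => ‖p j‖) atTop atTop :=
    tendsto_atTop_mono (fun j => (hpn j).le) tendsto_natCast_atTop_atTop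
  exact ⟨p, p, fun _ => 0, hpX, hpX, hten, hten, by simp⟩

theorem projOmega_proper_and_ker_cap_C5_general {m : ℕ} (X : Set (Em m))
    (hX : IsAlgSet X) (hub : ¬ Bornology.IsBounded X)
    (hC5alg : IsAlgSet (C5Inf X))
    (V₁ : Submodule ℂ (Em m))
    (A B : ℝ)
    (hXΩ : X ⊆ {z : Em m | ∃ z' ∈ V₁, ∃ z'' ∈ V₁ᗮ,
      z = z' + z'' ∧ ‖z''‖ ≤ A * (1 + ‖z'‖) ^ B})
    (hC5Ω : C5Inf X ⊆ {z : Em m | ∃ z' ∈ V₁, ∃ z'' ∈ V₁ᗮ,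
      z = z' + z'' ∧ ‖z''‖ ≤ A * (1 + ‖z'‖) ^ B}) :
    (∀ K : Set V₁, IsCompact K → IsCompact {p ∈ X | V₁.orthogonalProjectionOnto p ∈ K}) ∧
    (∀ K : Set V₁, IsCompact K → IsCompact {p ∈ C5Inf X | V₁.orthogonalProjectionOnto p ∈ K}) ∧
    (V₁ᗮ : Set (Em m)) ∩ C5Inf X = {0} := by
  refine ⟨fun K hK => isCompact_inter_preimage_orthogonalProjectionOnto hX.isClosed hXΩ hK,
    fun K hK => isCompact_inter_preimage_orthogonalProjectionOnto hC5alg.isClosed hC5Ω hK, ?_⟩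
  refine Set.Subset.antisymm (fun v ⟨hv, hvC⟩ => ?_) ?_
  · exact eq_zero_of_mem_orthogonal_of_smul_mem_algRegion hv fun c => hC5Ω (smul_mem_C5Inf hvC c)
  · rintro v rfl
    exact ⟨V₁ᗮ.zero_mem, zero_mem_C5Inf hub⟩

/-- Let `X ⊆ ℂ^m` be an unbounded pure `k`-dimensional complex algebraic set
with `C_{5,∞}(X)` a pure `k`-dimensional algebraic set, and let
`Ω = {z = z' + z'' : z' ∈ V₁, z'' ∈ V₁ᗮ, ‖z''‖ ≤ A (1 + ‖z'‖)^B}` be an algebraic region of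
type `(k, m)` (with orthogonal decomposition `ℂ^m = V₁ ⊕ V₁ᗮ`) containing `X` and
`C_{5,∞}(X)`, and let `π_Ω` be the orthogonal projection onto `V₁`.  Then the restrictions
of `π_Ω` to `X` and to `C_{5,∞}(X)` are proper maps, and `ker π_Ω ∩ C_{5,∞}(X) = {0}`. -/
theorem projOmega_proper_and_ker_cap_C5 {m k : ℕ} (X : Set (Em m))
    (hX : IsAlgSet X) (hpure : IsPureDim X k) (hub : ¬ Bornology.IsBounded X)
    (hC5alg : IsAlgSet (C5Inf X)) (hC5pure : IsPureDim (C5Inf X) k)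
    (V₁ : Submodule ℂ (Em m)) (hV₁ : Module.finrank ℂ V₁ = k)
    (A B : ℝ) (hA : 0 < A) (hB : 0 < B)
    (hXΩ : X ⊆ {z : Em m | ∃ z' ∈ V₁, ∃ z'' ∈ V₁ᗮ,
      z = z' + z'' ∧ ‖z''‖ ≤ A * (1 + ‖z'‖) ^ B})
    (hC5Ω : C5Inf X ⊆ {z : Em m | ∃ z' ∈ V₁, ∃ z'' ∈ V₁ᗮ,
      z = z' + z'' ∧ ‖z''‖ ≤ A * (1 + ‖z'‖) ^ B}) :
    (∀ K : Set V₁, IsCompact K → IsCompact {p ∈ X | V₁.orthogonalProjectionOnto p ∈ K}) ∧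
    (∀ K : Set V₁, IsCompact K → IsCompact {p ∈ C5Inf X | V₁.orthogonalProjectionOnto p ∈ K}) ∧
    (V₁ᗮ : Set (Em m)) ∩ C5Inf X = {0} :=
  projOmega_proper_and_ker_cap_C5_general X hX hub hC5alg V₁ A B hXΩ hC5Ω

end
end

section
/- Let X ⊂ ℂ^m be an unbounded pure k-dimensional complex algebraic set, let W ⊂ ℂ^m be an (m−k)-dimensional complex vector subspace with W ∩ C_{3,∞}(X) = {0}, write ℂ^m = V × W with V the orthogonal complement of W, and let π : ℂ^m → V be the orthogonal projection. If C_{4,∞}(X) ∩ W = {0}, then there exists a sufficiently large R > 0 such that Sing X \ B̄_R = Sing π \ B̄_R, where B̄_R is the closed ball of radius R centered at the origin of ℂ^m. -/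
open Filter Topology Metric

noncomputable section

/-! The points of `Sing π` outside `Sing X` are the smooth points whose tangent space meets `W`
nontrivially. Were they unbounded, normalizing a nonzero tangent vector in `W` at each of them and
extracting a convergent subsequence on the compact unit sphere would produce a unit vector of
`C_{4,∞}(X) ∩ W`. -/

theorem exists_tendsto_norm_atTop_of_not_isBounded {E : Type*} [SeminormedAddCommGroup E]
    {s : Set E} (hs : ¬ Bornology.IsBounded s) :
    ∃ p : ℕ → E, (∀ j, p j ∈ s) ∧ Tendsto (fun j => ‖p j‖) atTop atTop := by
  simp only [isBounded_iff_forall_norm_le, not_exists, not_forall, exists_prop, not_le] at hs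
  choose p hps hp using fun j : ℕ => hs j
  exact ⟨p, hps, tendsto_atTop_mono (fun j => (hp j).le) tendsto_natCast_atTop_atTop⟩

theorem exists_diff_closedBall_eq_union_diff {E : Type*} [SeminormedAddCommGroup E]
    (A : Set E) {B : Set E} (hB : Bornology.IsBounded B) :
    ∃ R : ℝ, 0 < R ∧ A \ closedBall 0 R = (A ∪ B) \ closedBall 0 R := by
  obtain ⟨r, hr⟩ := (isBounded_iff_subset_closedBall 0).mp hB
  refine ⟨max r 1, lt_max_of_lt_right one_pos, ?_⟩
  rw [Set.union_sdiff_distrib, Set.sdiff_eq_empty.mpr (hr.trans (closedBall_subset_closedBall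
    (le_max_left r 1))), Set.union_empty]

theorem isBounded_setOf_tangent_meets {𝕜 E : Type*} [RCLike 𝕜] [NormedAddCommGroup E]
    [NormedSpace 𝕜 E] [FiniteDimensional 𝕜 E] (S : Set E) (T : E → Submodule 𝕜 E)
    (W : Submodule 𝕜 E)
    (hlim : ∀ (p w : ℕ → E) (u : E), (∀ j, p j ∈ S) → (∀ j, w j ∈ T (p j)) →
      Tendsto (fun j => ‖p j‖) atTop atTop → Tendsto w atTop (𝓝 u) → u ∈ W → u = 0) :
    Bornology.IsBounded {p ∈ S | ∃ v ∈ T p, v ≠ 0 ∧ v ∈ W} := by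
  have := FiniteDimensional.proper_rclike 𝕜 E
  by_contra hunb
  obtain ⟨p, hpS, hp⟩ := exists_tendsto_norm_atTop_of_not_isBounded hunb
  choose hpS v hvT hv0 hvW using hpS
  set w : ℕ → E := fun j => (‖v j‖⁻¹ : 𝕜) • v j
  have hw : ∀ j, w j ∈ sphere (0 : E) 1 := fun j => by
    simp [w, norm_smul, hv0 j]
  obtain ⟨u, hu, φ, hφ, hwu⟩ := (isCompact_sphere (0 : E) 1).tendsto_subseq hw
  have huW : u ∈ W := W.closed_of_finiteDimensional.mem_of_tendsto hwu
    (Eventually.of_forall fun j => W.smul_mem _ (hvW (φ j)))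
  have hu0 : u = 0 := hlim (p ∘ φ) (w ∘ φ) u (fun j => hpS (φ j))
    (fun j => (T _).smul_mem _ (hvT (φ j))) (hp.comp hφ.tendsto_atTop) hwu huW
  simp [hu0] at hu

theorem singLocus_eq_singProj_outside_ball_general {m k : ℕ} (X : Set (Em m))
    (W : Submodule ℂ (Em m))
    (hC4 : C4Inf X k ∩ (W : Set (Em m)) = {0}) :
    ∃ R : ℝ, 0 < R ∧
      singLocus X k \ Metric.closedBall 0 R =
        (singLocus X k ∪ {p ∈ X | p ∉ singLocus X k ∧
            ∃ v ∈ zTangent X p, v ≠ 0 ∧ Submodule.orthogonalProjectionOnto Wᗮ v = 0}) \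
          Metric.closedBall 0 R := by
  have hbdd := isBounded_setOf_tangent_meets (X \ singLocus X k) (zTangent X) W
    fun p w u hp hw hpinf hwu huW => hC4.subset ⟨⟨p, w, hp, hw, hpinf, hwu⟩, huW⟩
  refine exists_diff_closedBall_eq_union_diff _ (hbdd.subset ?_)
  rintro p ⟨hpX, hps, v, hv, hv0, hvW⟩
  refine ⟨⟨hpX, hps⟩, v, hv, hv0, ?_⟩
  simpa using hvW

/-- Let `X ⊆ ℂ^m` be an unbounded pure `k`-dimensional complex algebraic
set, `W` an `(m-k)`-dimensional complex subspace with `W ∩ C_{3,∞}(X) = {0}`, and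
`π : ℂ^m → V = Wᗮ` the orthogonal projection.  If `C_{4,∞}(X) ∩ W = {0}`, then there is
`R > 0` with `Sing X \ B̄_R = Sing π \ B̄_R`, where `Sing π` is `Sing X` together with the
smooth points `p` of `X` at which `π` restricted to `T_p X` is not injective. -/
theorem singLocus_eq_singProj_outside_ball {m k : ℕ} (X : Set (Em m))
    (hX : IsAlgSet X) (hpure : IsPureDim X k) (hub : ¬ Bornology.IsBounded X)
    (W : Submodule ℂ (Em m)) (hW : Module.finrank ℂ W = m - k)
    (htrans : (W : Set (Em m)) ∩ C3Inf X = {0})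
    (hC4 : C4Inf X k ∩ (W : Set (Em m)) = {0}) :
    ∃ R : ℝ, 0 < R ∧
      singLocus X k \ Metric.closedBall 0 R =
        (singLocus X k ∪ {p ∈ X | p ∉ singLocus X k ∧
            ∃ v ∈ zTangent X p, v ≠ 0 ∧ Submodule.orthogonalProjectionOnto Wᗮ v = 0}) \
          Metric.closedBall 0 R :=
  singLocus_eq_singProj_outside_ball_general X W hC4

end
end

section
/- Let X ⊂ ℂ^m be an unbounded pure k-dimensional complex algebraic set, let W ⊂ ℂ^m be an (m−k)-dimensional complex vector subspace with W ∩ C_{3,∞}(X) = {0}, write ℂ^m = V × W with V the orthogonal complement of W and coordinates y = (y₁,…,y_{m−k}) on W, set Wⁱ := {(0,y) ∈ ℂ^m : y_i = 0} and let π_i : ℂ^m → ℂ^{k+1} be the projection π_i(x,y) = (x, y_i). If C_{5,∞}(X) ∩ Wⁱ = {0}, then there exists a sufficiently large R > 0 such that the restriction π_i : X \ B̄_R → π_i(X \ B̄_R) is a proper map, where B̄_R is the closed ball of radius R centered at the origin of ℂ^m. -/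
open Filter Topology Metric

noncomputable section

/-!
The hypothesis `C_{5,∞}(X) ∩ ker πᵢ = {0}` makes `πᵢ` antilipschitz on `X` outside a large
ball: otherwise there are secants `p_j - q_j` of `X` with `p_j, q_j → ∞` and
`‖πᵢ(p_j - q_j)‖ = o(‖p_j - q_j‖)`, and a limit of their normalisations is a unit vector of
`C_{5,∞}(X) ∩ ker πᵢ`. A continuous antilipschitz map is a topological embedding, so the
preimage of a compact subset of its image is compact.
-/

section SnocCLM

variable {𝕜 E : Type*} [RCLike 𝕜] [NormedAddCommGroup E] [NormedSpace 𝕜 E] {k : ℕ}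

def snocCLM (a : E →L[𝕜] EuclideanSpace 𝕜 (Fin k)) (b : E →L[𝕜] 𝕜) :
    E →L[𝕜] EuclideanSpace 𝕜 (Fin (k + 1)) :=
  ((EuclideanSpace.equiv (Fin (k + 1)) 𝕜).symm : (Fin (k + 1) → 𝕜) →L[𝕜] _).comp
    (ContinuousLinearMap.pi (Fin.lastCases b fun l => (EuclideanSpace.proj l).comp a))

theorem snocCLM_apply (a : E →L[𝕜] EuclideanSpace 𝕜 (Fin k)) (b : E →L[𝕜] 𝕜) (z : E) :
    snocCLM a b z = WithLp.toLp 2 (Fin.snoc (α := fun _ => 𝕜) (WithLp.ofLp (a z)) (b z)) := by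
  ext j
  induction j using Fin.lastCases with
  | last => simp [snocCLM]
  | cast l => simp [snocCLM]

theorem snocCLM_eq_zero_iff {a : E →L[𝕜] EuclideanSpace 𝕜 (Fin k)} {b : E →L[𝕜] 𝕜} {z : E} :
    snocCLM a b z = 0 ↔ a z = 0 ∧ b z = 0 := by
  rw [snocCLM_apply, WithLp.toLp_eq_zero, ← Fin.snoc_init_self (0 : Fin (k + 1) → 𝕜),
    Fin.snoc_inj]
  exact and_congr (WithLp.ofLp_eq_zero 2) Iff.rfl

end SnocCLM

theorem IsCompact.inter_preimage_of_isInducing_domRestrict {α β : Type*} [TopologicalSpace α]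
    [TopologicalSpace β] {S : Set α} {f : α → β} (hf : Topology.IsInducing (S.domRestrict f))
    {K : Set β} (hKS : K ⊆ f '' S) (hK : IsCompact K) : IsCompact (S ∩ f ⁻¹' K) := by
  have hKrange : K ⊆ Set.range (S.domRestrict f) := by rwa [Set.range_domRestrict]
  have := ((hf.isCompact_preimage_iff hKrange).mpr hK).image continuous_subtype_val
  rwa [Set.domRestrict_eq, Set.preimage_comp, Subtype.image_preimage_coe] at this

section SecantsAtInfinity

open scoped NNReal

variable {m : ℕ} {F : Type*} [NormedAddCommGroup F] [NormedSpace ℂ F] {X : Set (Em m)}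

theorem exists_mem_C5Inf_norm_eq_one_of_tendsto_ratio (L : Em m →L[ℂ] F) {p q : ℕ → Em m}
    (hp : ∀ j, p j ∈ X) (hq : ∀ j, q j ∈ X) (hp_inf : Tendsto (fun j => ‖p j‖) atTop atTop)
    (hq_inf : Tendsto (fun j => ‖q j‖) atTop atTop) (hpq : ∀ j, p j ≠ q j)
    (hratio : Tendsto (fun j => ‖L (p j) - L (q j)‖ / ‖p j - q j‖) atTop (𝓝 0)) :
    ∃ v ∈ C5Inf X, ‖v‖ = 1 ∧ L v = 0 := by
  set u : ℕ → Em m := fun j => (‖p j - q j‖⁻¹ : ℂ) • (p j - q j)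
  have hu_sphere : ∀ j, u j ∈ sphere (0 : Em m) 1 := fun j => by
    simp [u, norm_smul, sub_ne_zero.mpr (hpq j)]
  have hLu : ∀ j, ‖L (u j)‖ = ‖L (p j) - L (q j)‖ / ‖p j - q j‖ := fun j => by
    simp [u, norm_smul, div_eq_inv_mul]
  obtain ⟨v, hv, φ, hφ, hu_lim⟩ := (isCompact_sphere (0 : Em m) 1).tendsto_subseq hu_sphere
  refine ⟨v, ⟨p ∘ φ, q ∘ φ, fun j => (‖p (φ j) - q (φ j)‖⁻¹ : ℂ), fun j => hp _, fun j => hq _,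
    hp_inf.comp hφ.tendsto_atTop, hq_inf.comp hφ.tendsto_atTop, hu_lim⟩, by simpa using hv, ?_⟩
  have hLu_zero : Tendsto (fun j => L (u (φ j))) atTop (𝓝 0) := by
    rw [tendsto_zero_iff_norm_tendsto_zero]
    simpa only [hLu, Function.comp_def] using hratio.comp hφ.tendsto_atTop
  exact tendsto_nhds_unique ((L.continuous.tendsto v).comp hu_lim) hLu_zero

theorem exists_antilipschitzWith_domRestrict_of_C5Inf (L : Em m →L[ℂ] F)
    (hker : ∀ v ∈ C5Inf X, L v = 0 → v = 0) :
    ∃ R > 0, ∃ K : ℝ≥0, AntilipschitzWith K ((X \ closedBall 0 R).domRestrict L) := by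
  by_contra! h
  have hbad : ∀ j : ℕ, ∃ x ∈ X, ∃ (_ : (j : ℝ) + 1 < ‖x‖), ∃ y ∈ X, ∃ (_ : (j : ℝ) + 1 < ‖y‖),
      ((j : ℝ) + 1) * ‖L x - L y‖ < ‖x - y‖ := fun j => by
    simpa [antilipschitzWith_iff_le_mul_dist, Subtype.dist_eq, dist_eq_norm]
      using h (j + 1) (by positivity) (j + 1)
  choose p hp hp_large q hq hq_large hpq using hbad
  have hj_inf : Tendsto (fun j : ℕ => (j : ℝ) + 1) atTop atTop :=
    tendsto_atTop_add_const_right _ 1 tendsto_natCast_atTop_atTop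
  have hpq_pos : ∀ j, 0 < ‖p j - q j‖ := fun j =>
    (mul_nonneg (by positivity) (norm_nonneg _)).trans_lt (hpq j)
  have hratio_le : ∀ j, ‖L (p j) - L (q j)‖ / ‖p j - q j‖ ≤ 1 / ((j : ℝ) + 1) := fun j => by
    rw [div_le_div_iff₀ (hpq_pos j) (by positivity), one_mul, mul_comm]
    exact (hpq j).le
  obtain ⟨v, hv, hv_norm, hLv⟩ := exists_mem_C5Inf_norm_eq_one_of_tendsto_ratio L hp hq
    (tendsto_atTop_mono (fun j => (hp_large j).le) hj_inf)
    (tendsto_atTop_mono (fun j => (hq_large j).le) hj_inf)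
    (fun j => sub_ne_zero.mp (norm_pos_iff.mp (hpq_pos j)))
    (squeeze_zero (fun j => by positivity) hratio_le tendsto_one_div_add_atTop_nhds_zero_nat)
  simp [hker v hv hLv] at hv_norm

end SecantsAtInfinity

theorem proj_i_proper_outside_ball_general {m k : ℕ} (X : Set (Em m))
    (W : Submodule ℂ (Em m))
    (e₁ : Wᗮ ≃ₗᵢ[ℂ] EuclideanSpace ℂ (Fin k))
    (e₂ : W ≃ₗᵢ[ℂ] EuclideanSpace ℂ (Fin (m - k)))
    (i : Fin (m - k))
    (πi : Em m → Em (k + 1))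
    (hπi : πi = fun z => (WithLp.toLp 2 (Fin.snoc (α := fun _ => ℂ)
      (WithLp.ofLp (e₁ (Submodule.orthogonalProjectionOnto Wᗮ z)))
      (e₂ (Submodule.orthogonalProjectionOnto W z) i)) : Em (k + 1)))
    (Wi : Set (Em m))
    (hWidef : Wi = {z : Em m | z ∈ W ∧ e₂ (Submodule.orthogonalProjectionOnto W z) i = 0})
    (hC5Wi : C5Inf X ∩ Wi = {0}) :
    ∃ R : ℝ, 0 < R ∧
      ∀ K : Set (Em (k + 1)), K ⊆ πi '' (X \ Metric.closedBall 0 R) → IsCompact K →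
        IsCompact ((X \ Metric.closedBall 0 R) ∩ πi ⁻¹' K) := by
  set L := snocCLM (e₁.toLinearIsometry.toContinuousLinearMap.comp Wᗮ.orthogonalProjectionOnto)
    ((EuclideanSpace.proj i).comp
      (e₂.toLinearIsometry.toContinuousLinearMap.comp W.orthogonalProjectionOnto))
  have hπL : πi = L := by
    funext z
    simp [hπi, L, snocCLM_apply]
  have hker : ∀ v ∈ C5Inf X, L v = 0 → v = 0 := fun v hv hLv => by
    rw [snocCLM_eq_zero_iff] at hLv
    refine hC5Wi.subset ⟨hv, hWidef ▸ ⟨?_, hLv.2⟩⟩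
    simpa using hLv.1
  obtain ⟨R, hR, C, hC⟩ := exists_antilipschitzWith_domRestrict_of_C5Inf L hker
  refine ⟨R, hR, fun K hKS hK => ?_⟩
  rw [hπL] at hKS ⊢
  exact hK.inter_preimage_of_isInducing_domRestrict
    (hC.isInducing (L.continuous.comp continuous_subtype_val)) hKS

/-- Let `X ⊆ ℂ^m` be an unbounded pure `k`-dimensional complex algebraic
set, `W` an `(m-k)`-dimensional complex subspace with `W ∩ C_{3,∞}(X) = {0}`, with
`V = Wᗮ`; fix orthogonal coordinates `e₁ : V ≃ ℂ^k`, `e₂ : W ≃ ℂ^{m-k}`, let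
`Wⁱ = {(0, y) : yᵢ = 0}` and `πᵢ(x, y) = (x, yᵢ) : ℂ^m → ℂ^{k+1}`.
If `C_{5,∞}(X) ∩ Wⁱ = {0}`, then there is `R > 0` such that
`πᵢ : X \ B̄_R → πᵢ(X \ B̄_R)` is a proper map (preimages in `X \ B̄_R` of compact subsets
of the image are compact). -/
theorem proj_i_proper_outside_ball {m k : ℕ} (X : Set (Em m))
    (hX : IsAlgSet X) (hpure : IsPureDim X k) (hub : ¬ Bornology.IsBounded X)
    (W : Submodule ℂ (Em m)) (hW : Module.finrank ℂ W = m - k)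
    (htrans : (W : Set (Em m)) ∩ C3Inf X = {0})
    (e₁ : Wᗮ ≃ₗᵢ[ℂ] EuclideanSpace ℂ (Fin k))
    (e₂ : W ≃ₗᵢ[ℂ] EuclideanSpace ℂ (Fin (m - k)))
    (i : Fin (m - k))
    (πi : Em m → Em (k + 1))
    (hπi : πi = fun z => (WithLp.toLp 2 (Fin.snoc (α := fun _ => ℂ)
      (WithLp.ofLp (e₁ (Submodule.orthogonalProjectionOnto Wᗮ z)))
      (e₂ (Submodule.orthogonalProjectionOnto W z) i)) : Em (k + 1)))
    (Wi : Set (Em m))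
    (hWidef : Wi = {z : Em m | z ∈ W ∧ e₂ (Submodule.orthogonalProjectionOnto W z) i = 0})
    (hC5Wi : C5Inf X ∩ Wi = {0}) :
    ∃ R : ℝ, 0 < R ∧
      ∀ K : Set (Em (k + 1)), K ⊆ πi '' (X \ Metric.closedBall 0 R) → IsCompact K →
        IsCompact ((X \ Metric.closedBall 0 R) ∩ πi ⁻¹' K) :=
  proj_i_proper_outside_ball_general X W e₁ e₂ i πi hπi Wi hWidef hC5Wi

end
end
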